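/- Suppose for each $n$ (with $b=b(n)\to\infty$), the residuals $\hat{r}_1^{(n)},\ldots,\hat{r}_n^{(n)}$ sum to zero, $\frac{1}{n}X_n'X_n \to V$ positive definite, $\frac{1}{n}X_n'J_n'J_nX_n \to Q$ positive definite, and $\frac{\hat{\sigma}_n^2}{n}\to 0$ where $\hat{\sigma}_n^2 = \frac{1}{n}\sum \hat{r}_i^2$ is bounded. Then the SRB estimator $\hat{\beta}^*_{(b)}$ converges in probability (conditionally on the data) to $\hat{\beta}$, i.e., for every $\delta>0$, $P(\|\hat{\beta}^*_{(b)}-\hat{\beta}\|>\delta)\to 0$ as $n\to\infty$. -/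

import Mathlib

/-!
Conditionally on the data, `β* - β̂ = A ε` with `A = (X'X)⁻¹X'J'`, and the resampled errors
are independent with mean zero (the residuals sum to zero) and variance `σ̂²`. Hence
`E‖β* - β̂‖² = σ̂² tr(AA') = (σ̂²/n) tr((X'X/n)⁻¹ (X'J'JX/n) (X'X/n)⁻¹)`, where the trace tends
to `tr(V⁻¹QV⁻¹)` and `σ̂²/n → 0`; Chebyshev's inequality concludes.
-/

open MeasureTheory ProbabilityTheory Matrix Filter
open scoped ENNReal NNReal Topology

namespace Matrix

variable {ι K : Type*} [Fintype ι] [Field K]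

theorem inv_smul_of_ne_zero [DecidableEq ι] {k : K} (hk : k ≠ 0) (A : Matrix ι ι K) :
    (k • A)⁻¹ = k⁻¹ • A⁻¹ := by
  by_cases hA : IsUnit A.det
  · exact inv_eq_left_inv (by simp [smul_smul, hk, nonsing_inv_mul _ hA])
  · have hkA : ¬IsUnit (k • A).det := by
      rw [det_smul, IsUnit.mul_iff, not_and_or]
      exact Or.inr hA
    rw [nonsing_inv_apply_not_isUnit _ hA, nonsing_inv_apply_not_isUnit _ hkA, smul_zero]

theorem trace_inv_mul_mul_inv_smul [DecidableEq ι] {k : K} (hk : k ≠ 0) (M B : Matrix ι ι K) :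
    trace (M⁻¹ * B * M⁻¹) = k * trace ((k • M)⁻¹ * (k • B) * (k • M)⁻¹) := by
  rw [inv_smul_of_ne_zero hk]
  simp only [Matrix.smul_mul, Matrix.mul_smul, smul_smul, trace_smul, smul_eq_mul]
  field_simp

theorem mul_transpose_eq_inv_gram_mul_mul_inv_gram [DecidableEq ι] {m b : Type*} [Fintype m]
    [Fintype b] (X : Matrix m ι K) (J : Matrix b m K) :
    ((Xᵀ * X)⁻¹ * Xᵀ * Jᵀ) * ((Xᵀ * X)⁻¹ * Xᵀ * Jᵀ)ᵀ
      = (Xᵀ * X)⁻¹ * (Xᵀ * Jᵀ * J * X) * (Xᵀ * X)⁻¹ := by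
  simp only [transpose_mul, transpose_transpose, transpose_nonsing_inv, Matrix.mul_assoc]

end Matrix

theorem Filter.Tendsto.trace_inv_mul_mul_inv {ι α : Type*} [Fintype ι] [DecidableEq ι]
    {l : Filter α} {M B : α → Matrix ι ι ℝ} {V Q : Matrix ι ι ℝ}
    (hM : Tendsto M l (𝓝 V)) (hB : Tendsto B l (𝓝 Q)) (hV : V.det ≠ 0) :
    Tendsto (fun a => trace ((M a)⁻¹ * B a * (M a)⁻¹)) l (𝓝 (trace (V⁻¹ * Q * V⁻¹))) := by
  have hdet : ContinuousAt Ring.inverse V.det := by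
    simpa [Ring.inverse_eq_inv'] using continuousAt_inv₀ hV
  have hinv : Tendsto (fun a => (M a)⁻¹) l (𝓝 V⁻¹) :=
    (continuousAt_matrix_inv V hdet).tendsto.comp hM
  exact (continuous_id.matrix_trace.tendsto _).comp ((hinv.mul hB).mul hinv)

section DiscreteLaw

variable {Ω : Type*} [MeasurableSpace Ω] {P : Measure Ω} {N : ℕ} {e : Ω → ℝ}
  {c : ℝ≥0∞} {v : Fin N → ℝ} {g : ℝ → ℝ}

theorem integrable_comp_of_map_eq_smul_sum_dirac (he : Measurable e) (hc : c ≠ ∞)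
    (hlaw : P.map e = c • ∑ j, Measure.dirac (v j)) (hg : Measurable g) :
    Integrable (fun ω => g (e ω)) P := by
  refine (integrable_map_measure hg.aestronglyMeasurable he.aemeasurable).1 ?_
  rw [hlaw]
  exact (integrable_finsetSum_measure.2 fun j _ => integrable_dirac (by simp)).smul_measure hc

theorem integral_comp_of_map_eq_smul_sum_dirac (he : Measurable e)
    (hlaw : P.map e = c • ∑ j, Measure.dirac (v j)) (hg : Measurable g) :
    ∫ ω, g (e ω) ∂P = c.toReal * ∑ j, g (v j) := by
  rw [← integral_map he.aemeasurable hg.aestronglyMeasurable, hlaw, integral_smul_measure,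
    integral_finsetSum_measure fun j _ => integrable_dirac (by simp)]
  simp [integral_dirac, smul_eq_mul]

end DiscreteLaw

section SecondMoment

variable {Ω ι κ : Type*} [MeasurableSpace Ω] {P : Measure Ω} {e : Ω → ι → ℝ} {s : ℝ}

theorem integrable_mul_of_iIndepFun (hind : iIndepFun (fun i ω => e ω i) P)
    (hint : ∀ i, Integrable (fun ω => e ω i) P) (hsq : ∀ i, Integrable (fun ω => e ω i ^ 2) P)
    (i j : ι) : Integrable (fun ω => e ω i * e ω j) P := by
  obtain rfl | hij := eq_or_ne i j
  · simpa [sq] using hsq i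
  · exact (hind.indepFun hij).integrable_mul (hint i) (hint j)

theorem integral_mul_eq_ite_of_iIndepFun [DecidableEq ι] (hind : iIndepFun (fun i ω => e ω i) P)
    (hint : ∀ i, Integrable (fun ω => e ω i) P) (hmean : ∀ i, ∫ ω, e ω i ∂P = 0)
    (hsq : ∀ i, ∫ ω, e ω i ^ 2 ∂P = s) (i j : ι) :
    ∫ ω, e ω i * e ω j ∂P = if i = j then s else 0 := by
  obtain rfl | hij := eq_or_ne i j
  · simpa [sq] using hsq i
  · rw [if_neg hij]
    simpa [hmean] using (hind.indepFun hij).integral_mul_eq_mul_integral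
      (hint i).aestronglyMeasurable (hint j).aestronglyMeasurable

theorem sum_sq_mulVec_eq [Fintype ι] [Fintype κ] (A : Matrix κ ι ℝ) (x : ι → ℝ) :
    ∑ k, (A *ᵥ x) k ^ 2 = ∑ i, ∑ j, (Aᵀ * A) i j * (x i * x j) := by
  simp only [sq, mulVec, dotProduct, Finset.sum_mul_sum, mul_apply, transpose_apply]
  simp only [Finset.sum_mul]
  rw [Finset.sum_comm]
  refine Finset.sum_congr rfl fun i _ => ?_
  rw [Finset.sum_comm]
  exact Finset.sum_congr rfl fun j _ => Finset.sum_congr rfl fun k _ => by ring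

theorem integrable_sum_sq_mulVec [Fintype ι] [Fintype κ] (A : Matrix κ ι ℝ)
    (hint : ∀ i j, Integrable (fun ω => e ω i * e ω j) P) :
    Integrable (fun ω => ∑ k, (A *ᵥ e ω) k ^ 2) P := by
  simp_rw [sum_sq_mulVec_eq]
  exact integrable_finsetSum _ fun i _ => integrable_finsetSum _ fun j _ => (hint i j).const_mul _

theorem integral_sum_sq_mulVec [Fintype ι] [Fintype κ] [DecidableEq ι] (A : Matrix κ ι ℝ)
    (hint : ∀ i j, Integrable (fun ω => e ω i * e ω j) P)
    (hcov : ∀ i j, ∫ ω, e ω i * e ω j ∂P = if i = j then s else 0) :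
    ∫ ω, ∑ k, (A *ᵥ e ω) k ^ 2 ∂P = s * trace (A * Aᵀ) := by
  simp_rw [sum_sq_mulVec_eq]
  refine (integral_finsetSum _ fun i _ =>
    integrable_finsetSum _ fun j _ => (hint i j).const_mul _).trans ?_
  simp_rw [integral_finsetSum _ fun j _ => (hint _ j).const_mul _, integral_const_mul, hcov,
    mul_ite, mul_zero, Finset.sum_ite_eq, Finset.mem_univ, if_true, trace_mul_comm A, trace,
    diag_apply, Finset.mul_sum, mul_comm s]

end SecondMoment

theorem toReal_measure_sqrt_gt_le_integral_div {Ω : Type*} [MeasurableSpace Ω] {P : Measure Ω}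
    [IsFiniteMeasure P] {f : Ω → ℝ} (hf : 0 ≤ f) (hfi : Integrable f P) {δ : ℝ} (hδ : 0 < δ) :
    (P {ω | Real.sqrt (f ω) > δ}).toReal ≤ (∫ ω, f ω ∂P) / δ ^ 2 := by
  rw [le_div_iff₀ (by positivity), mul_comm]
  calc δ ^ 2 * (P {ω | Real.sqrt (f ω) > δ}).toReal
      ≤ δ ^ 2 * P.real {ω | δ ^ 2 ≤ f ω} := by
        gcongr
        exact measureReal_mono fun ω hω => ((Real.lt_sqrt hδ.le).1 hω).le
    _ ≤ ∫ ω, f ω ∂P := mul_meas_ge_le_integral_of_nonneg (ae_of_all _ hf) hfi _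

theorem ProbabilityTheory.iIndepFun.integrable_mul_of_map_eq_smul_sum_dirac {Ω ι : Type*}
    [MeasurableSpace Ω] {P : Measure Ω} {N : ℕ} {e : Ω → ι → ℝ} {c : ℝ≥0∞} {r : Fin N → ℝ}
    (hc : c ≠ ∞) (hmeas : ∀ i, Measurable fun ω => e ω i) (hind : iIndepFun (fun i ω => e ω i) P)
    (hlaw : ∀ i, P.map (fun ω => e ω i) = c • ∑ j, Measure.dirac (r j)) (i j : ι) :
    Integrable (fun ω => e ω i * e ω j) P :=
  integrable_mul_of_iIndepFun hind
    (fun i => integrable_comp_of_map_eq_smul_sum_dirac (hmeas i) hc (hlaw i) measurable_id)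
    (fun i => integrable_comp_of_map_eq_smul_sum_dirac (hmeas i) hc (hlaw i)
      (measurable_id.pow_const 2)) i j

theorem ProbabilityTheory.iIndepFun.integral_mul_of_map_eq_smul_sum_dirac {Ω ι : Type*}
    [MeasurableSpace Ω] [DecidableEq ι] {P : Measure Ω} {N : ℕ} {e : Ω → ι → ℝ} {c : ℝ≥0∞}
    {r : Fin N → ℝ} (hc : c ≠ ∞) (hr : ∑ j, r j = 0) (hmeas : ∀ i, Measurable fun ω => e ω i)
    (hind : iIndepFun (fun i ω => e ω i) P)
    (hlaw : ∀ i, P.map (fun ω => e ω i) = c • ∑ j, Measure.dirac (r j)) (i j : ι) :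
    ∫ ω, e ω i * e ω j ∂P = if i = j then c.toReal * ∑ k, r k ^ 2 else 0 :=
  integral_mul_eq_ite_of_iIndepFun hind
    (fun i => integrable_comp_of_map_eq_smul_sum_dirac (hmeas i) hc (hlaw i) measurable_id)
    (fun i => by
      simpa [hr] using integral_comp_of_map_eq_smul_sum_dirac (hmeas i) (hlaw i) measurable_id)
    (fun i => integral_comp_of_map_eq_smul_sum_dirac (hmeas i) (hlaw i)
      (measurable_id.pow_const 2)) i j

theorem srb_consistency_linear_general
    {Ω : Type*} [MeasurableSpace Ω] (P : Measure Ω) [IsProbabilityMeasure P]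
    (p : ℕ) (b : ℕ → ℕ)
    (X : (n : ℕ) → Matrix (Fin (n + 1)) (Fin p) ℝ)
    (J : (n : ℕ) → Matrix (Fin (b n)) (Fin (n + 1)) ℝ)
    (r : (n : ℕ) → Fin (n + 1) → ℝ) (hr : ∀ n, ∑ i, r n i = 0)
    (V Q : Matrix (Fin p) (Fin p) ℝ) (hV : V.PosDef)
    (hVlim : Tendsto (fun n : ℕ => (((n : ℝ) + 1))⁻¹ • ((X n)ᵀ * X n)) atTop (𝓝 V))
    (hQlim : Tendsto (fun n : ℕ => (((n : ℝ) + 1))⁻¹ • ((X n)ᵀ * (J n)ᵀ * J n * X n))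
      atTop (𝓝 Q))
    (σsq : ℕ → ℝ) (hσsq : ∀ n, σsq n = (1 / ((n : ℝ) + 1)) * ∑ i, (r n i) ^ 2)
    (hσ0 : Tendsto (fun n : ℕ => σsq n / ((n : ℝ) + 1)) atTop (𝓝 0))
    (ε : (n : ℕ) → Ω → Fin (b n) → ℝ)
    (hmeas : ∀ n (i : Fin (b n)), Measurable fun ω => ε n ω i)
    (hindep : ∀ n, iIndepFun
      (fun i ω => ε n ω i) P)
    (hlaw : ∀ n (i : Fin (b n)),
      Measure.map (fun ω => ε n ω i) P
        = ((n : ℝ≥0∞) + 1)⁻¹ • ∑ j : Fin (n + 1), Measure.dirac (r n j))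
    (βhat : (n : ℕ) → Fin p → ℝ)
    (βstar : (n : ℕ) → Ω → Fin p → ℝ)
    (hβstar : ∀ n ω, βstar n ω
        = βhat n + (((X n)ᵀ * X n)⁻¹ * (X n)ᵀ * (J n)ᵀ).mulVec (ε n ω)) :
    ∀ δ > (0 : ℝ),
      Tendsto (fun n =>
          (P {ω | Real.sqrt (∑ k, (βstar n ω k - βhat n k) ^ 2) > δ}).toReal)
        atTop (𝓝 0) := by
  intro δ hδ
  set t : ℕ → ℝ := fun n => trace ((((n : ℝ) + 1)⁻¹ • ((X n)ᵀ * X n))⁻¹ *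
    (((n : ℝ) + 1)⁻¹ • ((X n)ᵀ * (J n)ᵀ * J n * X n)) * (((n : ℝ) + 1)⁻¹ • ((X n)ᵀ * X n))⁻¹)
  have hc : ∀ n : ℕ, ((n : ℝ≥0∞) + 1)⁻¹ ≠ ∞ := fun n => by simp
  have hcov n := (hindep n).integral_mul_of_map_eq_smul_sum_dirac (hc n) (hr n) (hmeas n) (hlaw n)
  have hint n := (hindep n).integrable_mul_of_map_eq_smul_sum_dirac (hc n) (hmeas n) (hlaw n)
  have herr : ∀ n ω, ∑ k, (βstar n ω k - βhat n k) ^ 2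
      = ∑ k, ((((X n)ᵀ * X n)⁻¹ * (X n)ᵀ * (J n)ᵀ) *ᵥ ε n ω) k ^ 2 := by
    intro n ω
    simp [hβstar]
  have hintegrable : ∀ n, Integrable (fun ω => ∑ k, (βstar n ω k - βhat n k) ^ 2) P := by
    intro n
    simp_rw [herr]
    exact integrable_sum_sq_mulVec _ (hint n)
  have hmoment : ∀ n, ∫ ω, ∑ k, (βstar n ω k - βhat n k) ^ 2 ∂P = σsq n / (n + 1) * t n := by
    intro n
    have hvar : (((n : ℝ≥0∞) + 1)⁻¹).toReal * ∑ j, r n j ^ 2 = σsq n := by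
      rw [hσsq, ENNReal.toReal_inv, one_div]
      norm_cast
    simp_rw [herr]
    rw [integral_sum_sq_mulVec _ (hint n) (hcov n), mul_transpose_eq_inv_gram_mul_mul_inv_gram,
      trace_inv_mul_mul_inv_smul (k := ((n : ℝ) + 1)⁻¹) (by positivity), hvar, div_eq_mul_inv,
      mul_assoc (σsq n)]
  have hlim : Tendsto (fun n => σsq n / (n + 1) * t n / δ ^ 2) atTop (𝓝 0) := by
    have := (hσ0.mul (hVlim.trace_inv_mul_mul_inv hQlim hV.det_pos.ne')).div_const (δ ^ 2)
    rwa [zero_mul, zero_div] at this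
  refine squeeze_zero (fun n => ENNReal.toReal_nonneg) (fun n => ?_) hlim
  rw [← hmoment n]
  exact toReal_measure_sqrt_gt_le_integral_div (fun ω => by positivity) (hintegrable n) hδ

/-- conditional consistency of the SRB estimator in the linear model.
The `n`-th model has sample size `n+1`, subsample size `b n → ∞`, residuals summing to
zero, `(1/n) XᵀX → V` and `(1/n) XᵀJᵀJX → Q` positive definite, and `σ̂ₙ²/n → 0` with
`σ̂ₙ²` bounded.  Then for every `δ > 0`,
`P(‖βstar_n - βhat_n‖₂ > δ) → 0`. -/
theorem srb_consistency_linear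
    {Ω : Type*} [MeasurableSpace Ω] (P : Measure Ω) [IsProbabilityMeasure P]
    (p : ℕ) (b m : ℕ → ℕ) (hb : ∀ n, 0 < b n) (hbtop : Tendsto b atTop atTop)
    (hnb : ∀ n, n + 1 = m n * b n)
    (X : (n : ℕ) → Matrix (Fin (n + 1)) (Fin p) ℝ)
    (hX : ∀ n, IsUnit ((X n)ᵀ * X n).det)
    (J : (n : ℕ) → Matrix (Fin (b n)) (Fin (n + 1)) ℝ)
    (hJ : ∀ n (i : Fin (b n)) (j : Fin (n + 1)),
      J n i j = if (j : ℕ) % b n = (i : ℕ) then 1 else 0)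
    (r : (n : ℕ) → Fin (n + 1) → ℝ) (hr : ∀ n, ∑ i, r n i = 0)
    (V Q : Matrix (Fin p) (Fin p) ℝ) (hV : V.PosDef) (hQ : Q.PosDef)
    (hVlim : Tendsto (fun n : ℕ => (((n : ℝ) + 1))⁻¹ • ((X n)ᵀ * X n)) atTop (𝓝 V))
    (hQlim : Tendsto (fun n : ℕ => (((n : ℝ) + 1))⁻¹ • ((X n)ᵀ * (J n)ᵀ * J n * X n))
      atTop (𝓝 Q))
    (σsq : ℕ → ℝ) (hσsq : ∀ n, σsq n = (1 / ((n : ℝ) + 1)) * ∑ i, (r n i) ^ 2)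
    (hσ0 : Tendsto (fun n : ℕ => σsq n / ((n : ℝ) + 1)) atTop (𝓝 0))
    (hσbdd : ∃ C : ℝ, ∀ n, σsq n ≤ C)
    (ε : (n : ℕ) → Ω → Fin (b n) → ℝ)
    (hmeas : ∀ n (i : Fin (b n)), Measurable fun ω => ε n ω i)
    (hindep : ∀ n, iIndepFun
      (fun i ω => ε n ω i) P)
    (hlaw : ∀ n (i : Fin (b n)),
      Measure.map (fun ω => ε n ω i) P
        = ((n : ℝ≥0∞) + 1)⁻¹ • ∑ j : Fin (n + 1), Measure.dirac (r n j))
    (βhat : (n : ℕ) → Fin p → ℝ)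
    (βstar : (n : ℕ) → Ω → Fin p → ℝ)
    (hβstar : ∀ n ω, βstar n ω
        = βhat n + (((X n)ᵀ * X n)⁻¹ * (X n)ᵀ * (J n)ᵀ).mulVec (ε n ω)) :
    ∀ δ > (0 : ℝ),
      Tendsto (fun n =>
          (P {ω | Real.sqrt (∑ k, (βstar n ω k - βhat n k) ^ 2) > δ}).toReal)
        atTop (𝓝 0) :=
  srb_consistency_linear_general P p b X J r hr V Q hV hVlim hQlim σsq hσsq hσ0 ε hmeas hindep hlaw
    βhat βstar hβstar
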